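/- Two tableaux are tableau representations of the same combinatorial type if and only if one can be obtained from the other by a finite sequence of bumps. -/

import Mathlib

/- Common framework: arrangements of convex bodies in the plane, dual support
systems on the cylinder, swap pairs and combinatorial types, following
Dobbins–Holmsen–Hubard, "Realization spaces of arrangements of convex bodies". -/

open scoped Classical

noncomputable section

namespace RealBody

/-! ### Points, order types -/

/-- Twice the signed area of the triangle `p q r`; its sign is the orientation. -/
def ptOrient (p q r : ℝ × ℝ) : ℝ :=
  (q.1 - p.1) * (r.2 - p.2) - (q.2 - p.2) * (r.1 - p.1)

/-- The order type of an indexed planar point family. -/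
def orderTypeOf {ι : Type*} (P : ι → ℝ × ℝ) : ι → ι → ι → SignType :=
  fun a b c => SignType.sign (ptOrient (P a) (P b) (P c))

/-- The axioms of a rank-3 acyclic chirotope (an abstract order type):
nontrivial, alternating, the Grassmann-Plücker exchange relations, acyclic. -/
structure IsOrderType {ι : Type*} (χ : ι → ι → ι → SignType) : Prop where
  nontrivial : ∃ a b c, χ a b c ≠ 0
  alt₁ : ∀ a b c, χ b a c = -χ a b c
  alt₂ : ∀ a b c, χ a c b = -χ a b c
  exchange : ∀ a b c d e, χ a b c * χ a d e = 1 →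
    χ a b d * χ a c e = 1 ∨ χ a b e * χ a d c = 1
  acyclic : ∀ a b c d, ¬(0 ≤ χ b c d ∧ χ a c d ≤ 0 ∧ 0 ≤ χ a b d ∧ χ a b c ≤ 0 ∧
    (χ b c d ≠ 0 ∨ χ a c d ≠ 0 ∨ χ a b d ≠ 0 ∨ χ a b c ≠ 0))

/-- A simple order type: a uniform (nowhere zero on distinct triples) acyclic
rank-3 chirotope. -/
def IsSimpleOrderType {ι : Type*} (χ : ι → ι → ι → SignType) : Prop :=
  IsOrderType χ ∧ ∀ a b c : ι, a ≠ b → a ≠ c → b ≠ c → χ a b c ≠ 0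

/-! ### Support functions and arrangements -/

/-- The support function of a planar set, as a (2π-periodic) function of the
angle `θ` parametrizing the unit circle: `h_A(θ) = sup_{p ∈ A} ⟨(cos θ, sin θ), p⟩`. -/
def suppFn (A : Set (ℝ × ℝ)) (θ : ℝ) : ℝ :=
  sSup ((fun p : ℝ × ℝ => p.1 * Real.cos θ + p.2 * Real.sin θ) '' A)

/-- Two functions (of the circle parameter) cross at `θ`: they agree at `θ` and
their difference changes sign there, with `θ` an isolated coincidence. -/
def CrossesAt (g h : ℝ → ℝ) (θ : ℝ) : Prop :=
  g θ = h θ ∧ ∃ ε > 0, ∀ s ∈ Set.Ioo (θ - ε) θ, ∀ t ∈ Set.Ioo θ (θ + ε),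
    (g s - h s) * (g t - h t) < 0

/-- The crossing points (in the fundamental domain `(0, 2π] × ℝ` of the cylinder)
of an indexed family of curves given as graphs of functions.  For an arrangement
these are the common supporting tangents of pairs of bodies. -/
def crossings {L : Type*} (f : L → ℝ → ℝ) : Set (ℝ × ℝ) :=
  {p | p.1 ∈ Set.Ioc 0 (2 * Real.pi) ∧ ∃ i j : L, i ≠ j ∧ f i p.1 = p.2 ∧ f j p.1 = p.2}

/-- An arrangement of convex bodies: a finite nonempty indexed family of compact
convex sets in the plane such that (in dual terms) each pair of support curves
crosses at each point of intersection, no three support curves meet, and there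
are finitely many crossings (common supporting tangents). -/
structure Arrangement (L : Type*) [Fintype L] where
  nonemptyIdx : Nonempty L
  body : L → Set (ℝ × ℝ)
  isCompact : ∀ i, IsCompact (body i)
  convex : ∀ i, Convex ℝ (body i)
  nonempty : ∀ i, (body i).Nonempty
  transversal : ∀ i j, i ≠ j → ∀ θ : ℝ, suppFn (body i) θ = suppFn (body j) θ →
    CrossesAt (suppFn (body i)) (suppFn (body j)) θ
  noTriple : ∀ i j k : L, i ≠ j → i ≠ k → j ≠ k → ∀ θ : ℝ,
    ¬(suppFn (body i) θ = suppFn (body j) θ ∧ suppFn (body i) θ = suppFn (body k) θ)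
  finTangents : (crossings fun i => suppFn (body i)).Finite

/-- The dual support curve of a body, drawn on the cylinder `S¹ × ℝ`. -/
def dualCurve (A : Set (ℝ × ℝ)) : Set (Real.Angle × ℝ) :=
  {q | ∃ x : ℝ, q = ((x : Real.Angle), suppFn A x)}

/-! ### Swap pairs and combinatorial types -/

/-- The adjacent transposition of positions `i` and `i+1` (0-based) in `Fin n`
(the identity if out of range); its paper height is `i+1`. -/
def adjSwap (n i : ℕ) : Equiv.Perm (Fin n) :=
  if h : i + 1 < n then Equiv.swap ⟨i, Nat.lt_of_succ_lt h⟩ ⟨i + 1, h⟩ else 1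

/-- A swap pair on the index set `L`: a bijection `ρ : [n] → L` together with a
swap sequence, i.e. a finite sequence of adjacent transpositions (recorded by
their 0-based heights) whose composite is the identity permutation. -/
structure SwapPair (L : Type*) [Fintype L] where
  ρ : Fin (Fintype.card L) ≃ L
  heights : List ℕ
  heights_lt : ∀ h ∈ heights, h + 1 < Fintype.card L
  prod_eq_one : (heights.map (adjSwap (Fintype.card L))).prod = 1

/-- The elementary operations on swap pairs: a cyclic shift, and an independent
transposition of consecutive swaps whose heights differ by more than one. -/
def ElemMove {L : Type*} [Fintype L] (P Q : SwapPair L) : Prop :=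
  (∃ h rest, P.heights = h :: rest ∧ Q.heights = rest ++ [h] ∧
    Q.ρ = (adjSwap (Fintype.card L) h).trans P.ρ) ∨
  (∃ pre h₁ h₂ post, (h₁ + 1 < h₂ ∨ h₂ + 1 < h₁) ∧
    P.heights = pre ++ h₁ :: h₂ :: post ∧ Q.heights = pre ++ h₂ :: h₁ :: post ∧
    Q.ρ = P.ρ)

/-- Equivalence of swap pairs: generated by the elementary operations. -/
def SwapEquiv {L : Type*} [Fintype L] : SwapPair L → SwapPair L → Prop :=
  Relation.EqvGen ElemMove

def combSetoid (L : Type*) [Fintype L] : Setoid (SwapPair L) :=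
  Relation.EqvGen.setoid ElemMove

/-- A combinatorial type on `L`: an equivalence class of swap pairs. -/
def CombType (L : Type*) [Fintype L] : Type _ := Quotient (combSetoid L)

/-- The combinatorial type of a swap pair. -/
def SwapPair.cls {L : Type*} [Fintype L] (P : SwapPair L) : CombType L :=
  Quotient.mk (combSetoid L) P

/-- `P` is a swap pair obtained by sweeping the system of curves given by the
graphs of `f` once around the cylinder: the crossings are enumerated in
lexicographic order on `(0, 2π] × ℝ`, `ρ` lists the curves from bottom to top
before the first crossing, and the height of the `t`-th swap is one plus the
number of curves below the `t`-th crossing. -/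
def HasSwapPair {L : Type*} [Fintype L] (f : L → ℝ → ℝ) (P : SwapPair L) : Prop :=
  ∃ e : Fin P.heights.length → ℝ × ℝ,
    Function.Injective e ∧ Set.range e = crossings f ∧
    (∀ s t : Fin P.heights.length, s < t → Prod.Lex (· < ·) (· < ·) (e s) (e t)) ∧
    (∀ t : Fin P.heights.length, P.heights.get t = Nat.card {i : L // f i (e t).1 < (e t).2}) ∧
    ∃ θ₀ ∈ Set.Ioc (0 : ℝ) (2 * Real.pi),
      (∀ t : Fin P.heights.length, θ₀ < (e t).1) ∧
      ∀ a b : Fin (Fintype.card L), a < b → f (P.ρ a) θ₀ < f (P.ρ b) θ₀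

/-- `P` is a swap pair of the dual support system of the arrangement `𝒜`. -/
def ArrHasPair {L : Type*} [Fintype L] (𝒜 : Arrangement L) (P : SwapPair L) : Prop :=
  HasSwapPair (fun i => suppFn (𝒜.body i)) P

/-- The combinatorial type of the arrangement `𝒜` is `Ω`. -/
def ArrHasType {L : Type*} [Fintype L] (𝒜 : Arrangement L) (Ω : CombType L) : Prop :=
  ∃ P : SwapPair L, ArrHasPair 𝒜 P ∧ P.cls = Ω

/-- Two arrangements have the same combinatorial type. -/
def SameCombTypeArr {L : Type*} [Fintype L] (𝒜 ℬ : Arrangement L) : Prop :=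
  ∃ P Q : SwapPair L, ArrHasPair 𝒜 P ∧ ArrHasPair ℬ Q ∧ SwapEquiv P Q

/-! ### Restriction, orientability, the order type of an orientable arrangement -/

/-- Restriction (reindexing) of an arrangement along an injection. -/
def Arrangement.restrict {L L' : Type*} [Fintype L] [Fintype L'] (𝒜 : Arrangement L)
    (hne : Nonempty L') (e : L' → L) (he : Function.Injective e) : Arrangement L' where
  nonemptyIdx := hne
  body i := 𝒜.body (e i)
  isCompact i := 𝒜.isCompact (e i)
  convex i := 𝒜.convex (e i)
  nonempty i := 𝒜.nonempty (e i)
  transversal i j hij θ h := 𝒜.transversal (e i) (e j) (fun hh => hij (he hh)) θ h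
  noTriple i j k hij hik hjk θ := 𝒜.noTriple (e i) (e j) (e k)
    (fun hh => hij (he hh)) (fun hh => hik (he hh)) (fun hh => hjk (he hh)) θ
  finTangents := 𝒜.finTangents.subset (by
    rintro p ⟨hp, i, j, hij, h1, h2⟩
    exact ⟨hp, e i, e j, fun hh => hij (he hh), h1, h2⟩)

/-- An arrangement all of whose bodies are single points. -/
def IsPointArr {L : Type*} [Fintype L] (ℬ : Arrangement L) : Prop :=
  ∀ i, ∃ p : ℝ × ℝ, ℬ.body i = {p}

/-- The triple `(i,j,k)` of bodies of `𝒜` is orientable: it has the combinatorial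
type of three generic points. -/
def OrientableTriple {L : Type*} [Fintype L] (𝒜 : Arrangement L) (i j k : L) : Prop :=
  ∃ he : Function.Injective ![i, j, k],
    ∃ ℬ : Arrangement (Fin 3), IsPointArr ℬ ∧
      SameCombTypeArr (𝒜.restrict ⟨0⟩ ![i, j, k] he) ℬ

/-- An orientable arrangement: at least three bodies, every triple orientable. -/
def Orientable {L : Type*} [Fintype L] (𝒜 : Arrangement L) : Prop :=
  3 ≤ Fintype.card L ∧ ∀ i j k : L, i ≠ j → i ≠ k → j ≠ k → OrientableTriple 𝒜 i j k

/-- The support curve of body `a` is strictly on top of those of `b` and `c` at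
angle `θ`; equivalently `a` is the unique body of the triple touching the
boundary of the convex hull of the union at outward normal direction `θ`. -/
def TopAmong {L : Type*} [Fintype L] (𝒜 : Arrangement L) (a b c : L) (θ : ℝ) : Prop :=
  suppFn (𝒜.body b) θ < suppFn (𝒜.body a) θ ∧ suppFn (𝒜.body c) θ < suppFn (𝒜.body a) θ

/-- The ordered triple of bodies `(i,j,k)` is positively (counter-clockwise)
oriented: the three bodies appear in the order `i, j, k` on the boundary of the
convex hull of their union, i.e. their support curves reach the upper envelope
in this cyclic order. -/
def TripleOrientPos {L : Type*} [Fintype L] (𝒜 : Arrangement L) (i j k : L) : Prop :=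
  ∃ θ₁ θ₂ θ₃ : ℝ, θ₁ < θ₂ ∧ θ₂ < θ₃ ∧ θ₃ < θ₁ + 2 * Real.pi ∧
    TopAmong 𝒜 i j k θ₁ ∧ TopAmong 𝒜 j k i θ₂ ∧ TopAmong 𝒜 k i j θ₃

/-- The sign function recording the orientations of the triples of an
arrangement (zero on degenerate triples). -/
def arrChirotope {L : Type*} [Fintype L] (𝒜 : Arrangement L) : L → L → L → SignType :=
  fun i j k =>
    if i = j ∨ i = k ∨ j = k then 0 else if TripleOrientPos 𝒜 i j k then 1 else -1

/-! ### k-gons -/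

/-- A `k`-gon: the convex hull of at most `k` points. -/
def IsKgon (A : Set (ℝ × ℝ)) (k : ℕ) : Prop :=
  ∃ S : Finset (ℝ × ℝ), S.card ≤ k ∧ A = convexHull ℝ (S : Set (ℝ × ℝ))

/-! ### Projective transformations and realization spaces -/

/-- Denominator (third homogeneous coordinate) of the projective transformation
with matrix `M` at the point `p`. -/
def projDen (M : Matrix (Fin 3) (Fin 3) ℝ) (p : ℝ × ℝ) : ℝ :=
  M 2 0 * p.1 + M 2 1 * p.2 + M 2 2

/-- The projective transformation of the plane with homogeneous matrix `M`. -/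
def projAct (M : Matrix (Fin 3) (Fin 3) ℝ) (p : ℝ × ℝ) : ℝ × ℝ :=
  ((M 0 0 * p.1 + M 0 1 * p.2 + M 0 2) / projDen M p,
   (M 1 0 * p.1 + M 1 1 * p.2 + M 1 2) / projDen M p)

/-- The projective transformation with matrix `M` is admissible on `S`: it is
invertible, bounded, and orientation preserving on the convex hull of `S`
(positive Jacobian determinant `det M / (den p)³`). -/
def AdmissibleOn (M : Matrix (Fin 3) (Fin 3) ℝ) (S : Set (ℝ × ℝ)) : Prop :=
  IsUnit M.det ∧ ∀ p ∈ convexHull ℝ S, projDen M p ≠ 0 ∧ 0 < M.det / (projDen M p) ^ 3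

/-- Projective equivalence of arrangements, via an admissible projectivity. -/
def ProjEquivArr {L : Type*} [Fintype L] (𝒜 ℬ : Arrangement L) : Prop :=
  ∃ M : Matrix (Fin 3) (Fin 3) ℝ, AdmissibleOn M (⋃ i, 𝒜.body i) ∧
    ∀ i, projAct M '' 𝒜.body i = ℬ.body i

/-- The space of arrangements, metrized by the maximum over the index set of the
Hausdorff distances between corresponding bodies. -/
instance arrPseudoMetric (L : Type*) [Fintype L] : PseudoMetricSpace (Arrangement L) :=
  PseudoMetricSpace.induced
    (fun 𝒜 (i : L) => (⟨⟨𝒜.body i, 𝒜.isCompact i⟩, 𝒜.nonempty i⟩ :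
      TopologicalSpace.NonemptyCompacts (ℝ × ℝ)))
    inferInstance

/-- The full realization space of a combinatorial type. -/
abbrev RealizationSpace {L : Type*} [Fintype L] (Ω : CombType L) : Type _ :=
  {𝒜 : Arrangement L // ArrHasType 𝒜 Ω}

/-- The (projective) realization space: the full realization space modulo
admissible projectivities. -/
abbrev ProjRealizationSpace {L : Type*} [Fintype L] (Ω : CombType L) : Type _ :=
  Quot (fun A B : RealizationSpace Ω => ProjEquivArr A.1 B.1)

/-- The full `k`-gon realization space of a combinatorial type. -/
abbrev KgonRealizationSpace {L : Type*} [Fintype L] (k : ℕ) (Ω : CombType L) : Type _ :=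
  {𝒜 : Arrangement L // ArrHasType 𝒜 Ω ∧ ∀ i, IsKgon (𝒜.body i) k}

/-- The (projective) `k`-gon realization space. -/
abbrev ProjKgonRealizationSpace {L : Type*} [Fintype L] (k : ℕ) (Ω : CombType L) : Type _ :=
  Quot (fun A B : KgonRealizationSpace k Ω => ProjEquivArr A.1 B.1)

/-! ### Incidence sequences, layers, depth -/

/-- The order of the curves (bottom to top) after the first `t` swaps. -/
def ordAt {L : Type*} [Fintype L] (P : SwapPair L) (t : ℕ) : Fin (Fintype.card L) → L :=
  fun p => P.ρ (((P.heights.take t).map (adjSwap (Fintype.card L))).prod p)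

theorem heights_get_lt {L : Type*} [Fintype L] (P : SwapPair L)
    (t : Fin P.heights.length) : P.heights.get t + 1 < Fintype.card L :=
  P.heights_lt _ (List.get_mem _ _)

/-- First entry of the `t`-th label of the incidence sequence: the curve coming
from above (crossing downward) at the `t`-th crossing. -/
def incFst {L : Type*} [Fintype L] (P : SwapPair L) (t : Fin P.heights.length) : L :=
  ordAt P t.1 ⟨P.heights.get t + 1, heights_get_lt P t⟩

/-- Second entry of the `t`-th label of the incidence sequence: the curve coming
from below (crossing upward) at the `t`-th crossing. -/
def incSnd {L : Type*} [Fintype L] (P : SwapPair L) (t : Fin P.heights.length) : L :=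
  ordAt P t.1 ⟨P.heights.get t, Nat.lt_of_succ_lt (heights_get_lt P t)⟩

/-- The ordered pair `(i,j)` occurs in the incidence sequence of `P`. -/
def IncidentPair {L : Type*} [Fintype L] (P : SwapPair L) (i j : L) : Prop :=
  ∃ t : Fin P.heights.length, incFst P t = i ∧ incSnd P t = j

def Touches {L : Type*} [Fintype L] (P : SwapPair L) (i j : L) : Prop :=
  IncidentPair P i j ∨ IncidentPair P j i

/-- `i` is a non-isolated vertex of the incidence graph. -/
def IsActive {L : Type*} [Fintype L] (P : SwapPair L) (i : L) : Prop :=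
  ∃ j, Touches P i j

/-- Connectivity in the incidence graph (whose components are the layers). -/
def Linked {L : Type*} [Fintype L] (P : SwapPair L) : L → L → Prop :=
  Relation.ReflTransGen (Touches P)

/-- The depth: the number of layers (connected components of the incidence
graph, excluding isolated vertices).  Depth 1 is called non-layered. -/
def Depth {L : Type*} [Fintype L] (P : SwapPair L) : ℕ :=
  Nat.card (Quot fun i j : {i : L // IsActive P i} => Linked P i.1 j.1)

/-! ### Local sequences, tableaux, periods, bumps -/

/-- A tableau on `L`: an ordering of `L` (rows, bottom to top) together with a
list of indices in each row. -/
structure Tableau (L : Type*) [Fintype L] where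
  ρ : Fin (Fintype.card L) ≃ L
  row : L → List L

/-- The local sequence of the index `i`: the indices met by curve `i`, in
sweep order. -/
def localSeq {L : Type*} [Fintype L] (P : SwapPair L) (i : L) : List L :=
  (List.finRange P.heights.length).filterMap fun t =>
    if incFst P t = i then some (incSnd P t)
    else if incSnd P t = i then some (incFst P t) else none

/-- The associated tableau of a swap pair: rows are the local sequences, ordered
by `ρ`. -/
def assocTableau {L : Type*} [Fintype L] (P : SwapPair L) : Tableau L :=
  ⟨P.ρ, localSeq P⟩

/-- `Λ'` is a `p`-th root of `Λ`: `Λ` is the `p`-fold row-wise concatenation of `Λ'`. -/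
def IsPeriodOf {L : Type*} [Fintype L] (Λ' Λ : Tableau L) (p : ℕ) : Prop :=
  Λ'.ρ = Λ.ρ ∧ ∀ i, Λ.row i = (List.replicate p (Λ'.row i)).flatten

/-- The periodicity of a tableau: the largest `p` such that `Λ` is a `p`-fold
concatenation; the corresponding `Λ'` is called the period of `Λ`. -/
def Periodicity {L : Type*} [Fintype L] (Λ : Tableau L) : ℕ :=
  sSup {p : ℕ | ∃ Λ', IsPeriodOf Λ' Λ p}

/-- Bumping the adjacent pair `{j,k}` in the tableau `Λ` produces `Λ'`: the rows
of `j` and `k` begin with each other; these first entries are moved to the ends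
of their rows, and rows `j`, `k` exchange their positions in the row order. -/
def Bump {L : Type*} [Fintype L] (Λ Λ' : Tableau L) (j k : L) : Prop :=
  j ≠ k ∧
  (∃ r, Λ.row j = k :: r ∧ Λ'.row j = r ++ [k]) ∧
  (∃ r, Λ.row k = j :: r ∧ Λ'.row k = r ++ [j]) ∧
  (∀ i, i ≠ j → i ≠ k → Λ'.row i = Λ.row i) ∧
  Λ'.ρ = Λ.ρ.trans (Equiv.swap j k)

def BumpStep {L : Type*} [Fintype L] (Λ Λ' : Tableau L) : Prop :=
  ∃ j k, Bump Λ Λ' j k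

/-! ### Support configurations -/

/-- The pair of bodies `(i,j)` has a common supporting tangent with outward
normal angle `θ` meeting `i` before `j`: dually, the support curve of `i`
crosses that of `j` downward at `θ`. -/
def DownCrossAt {L : Type*} [Fintype L] (𝒜 : Arrangement L) (i j : L) (θ : ℝ) : Prop :=
  i ≠ j ∧ suppFn (𝒜.body i) θ = suppFn (𝒜.body j) θ ∧
  ∃ ε > 0, (∀ s ∈ Set.Ioo (θ - ε) θ, suppFn (𝒜.body j) s < suppFn (𝒜.body i) s) ∧
    ∀ t ∈ Set.Ioo θ (θ + ε), suppFn (𝒜.body i) t < suppFn (𝒜.body j) t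

/-- Carrier for labeled vector configurations: to each ordered pair of indices,
a closed set of directions (a finite set of unit vectors, in practice). -/
abbrev ConfigCarrier (L : Type*) : Type _ :=
  L × L → TopologicalSpace.Closeds Real.Angle

/-- The support configuration of an arrangement: `(i,j)` is labeled with the set
of outward normal directions of common supporting tangents meeting `i` first. -/
def suppConfig {L : Type*} [Fintype L] (𝒜 : Arrangement L) : ConfigCarrier L :=
  fun ij =>
    ⟨closure {a : Real.Angle | ∃ x : ℝ, a = (x : Real.Angle) ∧ DownCrossAt 𝒜 ij.1 ij.2 x},
      isClosed_closure⟩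

/-- The support configuration space `𝒱(Ω)` of a combinatorial type: labeled
configurations of directions obtained from the incidence sequence of a swap pair
representing `Ω` together with weakly increasing angles in `(0, 2π]`, where
consecutive angles may coincide only if the corresponding heights differ by
more than one. -/
def VSpace {L : Type*} [Fintype L] (Ω : CombType L) : Set (ConfigCarrier L) :=
  {X | ∃ P : SwapPair L, P.cls = Ω ∧ ∃ θ : Fin P.heights.length → ℝ,
    (∀ t, θ t ∈ Set.Ioc 0 (2 * Real.pi)) ∧
    (∀ s t : Fin P.heights.length, s ≤ t → θ s ≤ θ t) ∧
    (∀ s t : Fin P.heights.length, s.1 + 1 = t.1 → θ s = θ t →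
      P.heights.get s + 1 < P.heights.get t ∨ P.heights.get t + 1 < P.heights.get s) ∧
    ∀ i j : L, X (i, j) =
      ⟨closure {a : Real.Angle |
          ∃ t : Fin P.heights.length, incFst P t = i ∧ incSnd P t = j ∧ a = (θ t : Real.Angle)},
        isClosed_closure⟩}

/-- Rotation of the plane by angle `α` (the `SO(2)` action on bodies). -/
def rotPt (α : ℝ) (p : ℝ × ℝ) : ℝ × ℝ :=
  (p.1 * Real.cos α - p.2 * Real.sin α, p.1 * Real.sin α + p.2 * Real.cos α)

/-- The `SO(2)` action on configurations of directions: rotate every label. -/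
def rotConfig {L : Type*} (α : ℝ) (X : ConfigCarrier L) : ConfigCarrier L :=
  fun ij =>
    ⟨closure ((fun a : Real.Angle => a + (α : Real.Angle)) '' (X ij : Set Real.Angle)),
      isClosed_closure⟩

end RealBody

/-!
A cyclic shift of a swap pair moves the first entry `(j, k)` of its incidence sequence to the
end, and since the swap sequence composes to the identity the final order is the initial one with
`j` and `k` exchanged: this is exactly the bump of `{j, k}`. It is undone by the remaining cyclic
shifts, each again a bump. An independent transposition exchanges two incidences of disjoint
pairs and so changes no local sequence.

Conversely, if the rows of `j` and `k` begin with each other, no swap before the first swap of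
`j` and `k` moves either of them, so that swap commutes to the front and a cyclic shift performs
the bump. Finally a tableau determines its swap pair up to independent transpositions: the first
swap `(j, k)` is visible as the first entries of rows `j` and `k`, so any other swap pair with the
same tableau can be brought to begin with it, and one concludes by induction on the length.
-/

namespace RealBody

variable {L : Type*} {n : ℕ}

lemma adjSwap_of_lt {h : ℕ} (hh : h + 1 < n) :
    adjSwap n h = Equiv.swap ⟨h, by omega⟩ ⟨h + 1, hh⟩ := dif_pos hh

lemma adjSwap_apply_of_ne {h : ℕ} {x : Fin n} (hx₀ : x.val ≠ h) (hx₁ : x.val ≠ h + 1) :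
    adjSwap n h x = x := by
  unfold adjSwap
  split
  · exact Equiv.swap_apply_of_ne_of_ne (by simpa [Fin.ext_iff]) (by simpa [Fin.ext_iff])
  · rfl

lemma adjSwap_mul_comm {h₁ h₂ : ℕ} (gap : h₁ + 1 < h₂ ∨ h₂ + 1 < h₁) :
    adjSwap n h₁ * adjSwap n h₂ = adjSwap n h₂ * adjSwap n h₁ := by
  unfold adjSwap
  split_ifs <;> try simp only [one_mul, mul_one]
  exact Equiv.Perm.Disjoint.commute
    (Equiv.Perm.disjoint_swap_swap (by simp [Fin.ext_iff]; omega))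

lemma adjSwap_trans {h : ℕ} (hh : h + 1 < n) (ρ : Fin n ≃ L) :
    (adjSwap n h).trans ρ = ρ.trans (Equiv.swap (ρ ⟨h, by omega⟩) (ρ ⟨h + 1, hh⟩)) := by
  ext x
  simp only [adjSwap_of_lt hh, Equiv.trans_apply, Equiv.swap_apply_def, Fin.ext_iff,
    EmbeddingLike.apply_eq_iff_eq]
  split_ifs <;> simp_all

lemma adjSwap_trans_apply_ne {p : ℕ} (hp : p + 1 < n) (ρ : Fin n ≃ L) {y : Fin n}
    (hy₁ : (adjSwap n p).trans ρ y ≠ ρ ⟨p + 1, hp⟩)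
    (hy₀ : (adjSwap n p).trans ρ y ≠ ρ ⟨p, by omega⟩) :
    y.val ≠ p ∧ y.val ≠ p + 1 := by
  refine ⟨fun hy => hy₁ ?_, fun hy => hy₀ ?_⟩
  · rw [show y = ⟨p, by omega⟩ from Fin.ext hy]
    simp [adjSwap_of_lt hp]
  · rw [show y = ⟨p + 1, hp⟩ from Fin.ext hy]
    simp [adjSwap_of_lt hp]

def adjSwapProd (n : ℕ) (l : List ℕ) : Equiv.Perm (Fin n) := (l.map (adjSwap n)).prod

@[simp] lemma adjSwapProd_nil : adjSwapProd n [] = 1 := rfl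

@[simp] lemma adjSwapProd_cons (h : ℕ) (l : List ℕ) :
    adjSwapProd n (h :: l) = adjSwap n h * adjSwapProd n l := List.prod_cons

@[simp] lemma adjSwapProd_append (u v : List ℕ) :
    adjSwapProd n (u ++ v) = adjSwapProd n u * adjSwapProd n v := by
  simp [adjSwapProd]

lemma adjSwapProd_rotate {h : ℕ} {l : List ℕ} (hprod : adjSwapProd n (h :: l) = 1) :
    adjSwapProd n (l ++ [h]) = 1 := by
  rw [adjSwapProd_cons] at hprod
  simpa using mul_eq_one_comm.1 hprod

lemma adjSwapProd_cons_trans_of_eq_one {h : ℕ} {l : List ℕ} (hprod : adjSwapProd n (h :: l) = 1)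
    (ρ : Fin n ≃ L) : (adjSwapProd n l).trans ((adjSwap n h).trans ρ) = ρ := by
  rw [← Equiv.trans_assoc, ← Equiv.Perm.mul_def, ← adjSwapProd_cons, hprod, Equiv.Perm.one_def,
    Equiv.refl_trans]

/-- The independent transposition of the paper, acting on the sequence of heights. -/
def IndepSwap (l l' : List ℕ) : Prop :=
  ∃ pre h₁ h₂ post, (h₁ + 1 < h₂ ∨ h₂ + 1 < h₁) ∧
    l = pre ++ h₁ :: h₂ :: post ∧ l' = pre ++ h₂ :: h₁ :: post

namespace IndepSwap

variable {l l' : List ℕ}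

lemma symm : IndepSwap l l' → IndepSwap l' l
  | ⟨pre, h₁, h₂, post, gap, hl, hl'⟩ => ⟨pre, h₂, h₁, post, gap.symm, hl', hl⟩

lemma cons (h : ℕ) : IndepSwap l l' → IndepSwap (h :: l) (h :: l')
  | ⟨pre, h₁, h₂, post, gap, hl, hl'⟩ => ⟨h :: pre, h₁, h₂, post, gap, by simp [hl], by simp [hl']⟩

lemma perm : IndepSwap l l' → l.Perm l'
  | ⟨_, _, _, _, _, hl, hl'⟩ => hl ▸ hl' ▸ .append_left _ (.swap _ _ _)

lemma adjSwapProd_eq : IndepSwap l l' → adjSwapProd n l = adjSwapProd n l'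
  | ⟨_, _, _, _, gap, hl, hl'⟩ => by
    simp only [hl, hl', adjSwapProd_append, adjSwapProd_cons, ← mul_assoc, adjSwap_mul_comm gap]

end IndepSwap

lemma indepSwaps_symm {l l' : List ℕ} (h : Relation.ReflTransGen IndepSwap l l') :
    Relation.ReflTransGen IndepSwap l' l := by
  induction h with
  | refl => rfl
  | tail _ hstep ih => exact ih.head hstep.symm

lemma indepSwaps_perm {l l' : List ℕ} (h : Relation.ReflTransGen IndepSwap l l') : l.Perm l' := by
  induction h with
  | refl => rfl
  | tail _ hstep ih => exact ih.trans hstep.perm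

lemma indepSwaps_cons (h : ℕ) {l l' : List ℕ} (hs : Relation.ReflTransGen IndepSwap l l') :
    Relation.ReflTransGen IndepSwap (h :: l) (h :: l') :=
  hs.lift (List.cons h) fun _ _ => IndepSwap.cons h

/-- The incidence sequence of the sweep that starts from the order `ρ` and performs the
swaps at the heights `l`; a height out of range swaps nothing and is skipped. -/
def incList : (Fin n ≃ L) → List ℕ → List (L × L)
  | _, [] => []
  | ρ, h :: l =>
    if hh : h + 1 < n then (ρ ⟨h + 1, hh⟩, ρ ⟨h, by omega⟩) :: incList ((adjSwap n h).trans ρ) l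
    else incList ((adjSwap n h).trans ρ) l

lemma incList_cons {h : ℕ} (hh : h + 1 < n) (ρ : Fin n ≃ L) (l : List ℕ) :
    incList ρ (h :: l) = (ρ ⟨h + 1, hh⟩, ρ ⟨h, by omega⟩) :: incList ((adjSwap n h).trans ρ) l :=
  dif_pos hh

lemma incList_append (ρ : Fin n ≃ L) (u v : List ℕ) :
    incList ρ (u ++ v) = incList ρ u ++ incList ((adjSwapProd n u).trans ρ) v := by
  induction u generalizing ρ with
  | nil => rfl
  | cons h u ih =>
    by_cases hh : h + 1 < n <;> simp [incList, hh, ih, Equiv.Perm.mul_def, Equiv.trans_assoc]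

lemma map_finRange_eq_incList (ρ : Fin n ≃ L) (l : List ℕ) (hl : ∀ h ∈ l, h + 1 < n) :
    (List.finRange l.length).map (fun t : Fin l.length =>
      (ρ (adjSwapProd n (l.take t) ⟨l[t] + 1, hl _ (List.getElem_mem _)⟩),
        ρ (adjSwapProd n (l.take t) ⟨l[t], Nat.lt_of_succ_lt (hl _ (List.getElem_mem _))⟩))) =
      incList ρ l := by
  induction l generalizing ρ with
  | nil => rfl
  | cons h l ih =>
    rw [incList_cons (hl h List.mem_cons_self), ← ih _ fun x hx => hl x (List.mem_cons_of_mem _ hx)]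
    simp [List.finRange_succ]

def partner (i : L) (p : L × L) : Option L :=
  if p.1 = i then some p.2 else if p.2 = i then some p.1 else none

lemma partner_eq_none_or {p q : L × L} (h₁₁ : p.1 ≠ q.1) (h₁₂ : p.1 ≠ q.2) (h₂₁ : p.2 ≠ q.1)
    (h₂₂ : p.2 ≠ q.2) (i : L) : partner i p = none ∨ partner i q = none := by
  unfold partner
  split_ifs <;> simp_all

lemma partner_eq_none_of_sym2_ne {p : L × L} {j k : L} (hne : s(p.1, p.2) ≠ s(j, k))
    (hj : ∀ x, partner j p = some x → x = k) (hk : ∀ x, partner k p = some x → x = j) :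
    partner j p = none ∧ partner k p = none := by
  obtain ⟨a, b⟩ := p
  unfold partner at *
  split_ifs at * <;> simp_all [Sym2.eq_swap]

def localSeqOf (ρ : Fin n ≃ L) (l : List ℕ) (i : L) : List L :=
  (incList ρ l).filterMap (partner i)

@[simp] lemma localSeqOf_nil (ρ : Fin n ≃ L) (i : L) : localSeqOf ρ [] i = [] := rfl

lemma localSeqOf_cons {h : ℕ} (hh : h + 1 < n) (ρ : Fin n ≃ L) (l : List ℕ) (i : L) :
    localSeqOf ρ (h :: l) i =
      (partner i (ρ ⟨h + 1, hh⟩, ρ ⟨h, by omega⟩)).toList ++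
        localSeqOf ((adjSwap n h).trans ρ) l i := by
  rw [localSeqOf, incList_cons hh, List.filterMap_cons]
  cases partner i _ <;> rfl

lemma localSeqOf_append (ρ : Fin n ≃ L) (u v : List ℕ) (i : L) :
    localSeqOf ρ (u ++ v) i = localSeqOf ρ u i ++ localSeqOf ((adjSwapProd n u).trans ρ) v i := by
  rw [localSeqOf, incList_append, List.filterMap_append]
  rfl

lemma localSeqOf_cons_cons_comm {h₁ h₂ : ℕ} (gap : h₁ + 1 < h₂ ∨ h₂ + 1 < h₁)
    (hh₁ : h₁ + 1 < n) (hh₂ : h₂ + 1 < n) (ρ : Fin n ≃ L) (l : List ℕ) :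
    localSeqOf ρ (h₁ :: h₂ :: l) = localSeqOf ρ (h₂ :: h₁ :: l) := by
  funext i
  have fix : ∀ {a b : ℕ} (hb : b < n), b ≠ a → b ≠ a + 1 →
      ((adjSwap n a).trans ρ) ⟨b, hb⟩ = ρ ⟨b, hb⟩ :=
    fun _ hb₀ hb₁ => congrArg ρ (adjSwap_apply_of_ne hb₀ hb₁)
  have htail : (adjSwap n h₂).trans ((adjSwap n h₁).trans ρ) =
      (adjSwap n h₁).trans ((adjSwap n h₂).trans ρ) := by
    simp only [← Equiv.trans_assoc, ← Equiv.Perm.mul_def, adjSwap_mul_comm gap]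
  rw [localSeqOf_cons hh₁, localSeqOf_cons hh₂, localSeqOf_cons hh₂, localSeqOf_cons hh₁,
    fix hh₂ (by omega) (by omega), fix (by omega : h₂ < n) (by omega) (by omega),
    fix hh₁ (by omega) (by omega), fix (by omega : h₁ < n) (by omega) (by omega), htail,
    ← List.append_assoc, ← List.append_assoc]
  congr 1
  rcases partner_eq_none_or (p := (ρ ⟨h₁ + 1, hh₁⟩, ρ ⟨h₁, by omega⟩))
    (q := (ρ ⟨h₂ + 1, hh₂⟩, ρ ⟨h₂, by omega⟩))
    (ρ.injective.ne (by simp; omega)) (ρ.injective.ne (by simp; omega))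
    (ρ.injective.ne (by simp; omega)) (ρ.injective.ne (by simp; omega)) i with h | h <;>
    simp [h]

lemma IndepSwap.localSeqOf_eq {l l' : List ℕ} (hs : IndepSwap l l') (hl : ∀ h ∈ l, h + 1 < n)
    (ρ : Fin n ≃ L) : localSeqOf ρ l = localSeqOf ρ l' := by
  obtain ⟨pre, h₁, h₂, post, gap, rfl, rfl⟩ := hs
  funext i
  rw [localSeqOf_append, localSeqOf_append,
    localSeqOf_cons_cons_comm gap (hl h₁ (by simp)) (hl h₂ (by simp))]

lemma indepSwaps_localSeqOf_eq {l l' : List ℕ} (hs : Relation.ReflTransGen IndepSwap l l')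
    (hl : ∀ h ∈ l, h + 1 < n) (ρ : Fin n ≃ L) : localSeqOf ρ l = localSeqOf ρ l' := by
  induction hs with
  | refl => rfl
  | tail hchain hstep ih =>
    exact ih.trans
      (hstep.localSeqOf_eq (fun h hm => hl h ((indepSwaps_perm hchain).mem_iff.2 hm)) ρ)

lemma exists_indepSwaps_cons_of_head? (ρ : Fin n ≃ L) (l : List ℕ) (hl : ∀ h ∈ l, h + 1 < n)
    {j k : L} (hj : (localSeqOf ρ l j).head? = some k) (hk : (localSeqOf ρ l k).head? = some j) :
    ∃ h r, Relation.ReflTransGen IndepSwap l (h :: r) ∧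
      ∃ hh : h + 1 < n, s(ρ ⟨h + 1, hh⟩, ρ ⟨h, by omega⟩) = s(j, k) := by
  induction l generalizing ρ with
  | nil => simp at hj
  | cons p l ih =>
    have hp : p + 1 < n := hl p List.mem_cons_self
    rw [localSeqOf_cons hp] at hj hk
    by_cases hpair : s(ρ ⟨p + 1, hp⟩, ρ ⟨p, by omega⟩) = s(j, k)
    · exact ⟨p, l, .refl, hp, hpair⟩
    obtain ⟨hjp, hkp⟩ := partner_eq_none_of_sym2_ne (p := (ρ ⟨p + 1, hp⟩, ρ ⟨p, by omega⟩)) hpair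
      (fun x hx => by simpa [hx] using hj) (fun x hx => by simpa [hx] using hk)
    rw [hjp, Option.toList_none, List.nil_append] at hj
    rw [hkp, Option.toList_none, List.nil_append] at hk
    obtain ⟨h, r, hchain, hh, hsym⟩ := ih _ (fun x hx => hl x (List.mem_cons_of_mem _ hx)) hj hk
    have hjk : ∀ {x}, x ∈ s(j, k) → x ≠ ρ ⟨p + 1, hp⟩ ∧ x ≠ ρ ⟨p, by omega⟩ := by
      unfold partner at hjp hkp
      intro x hx
      rcases Sym2.mem_iff.1 hx with rfl | rfl <;> constructor <;> rintro rfl <;> simp_all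
    obtain ⟨h₁p, h₁p'⟩ := adjSwap_trans_apply_ne hp ρ (hjk (hsym ▸ Sym2.mem_mk_left _ _)).1
      (hjk (hsym ▸ Sym2.mem_mk_left _ _)).2
    obtain ⟨h₀p, h₀p'⟩ := adjSwap_trans_apply_ne hp ρ (hjk (hsym ▸ Sym2.mem_mk_right _ _)).1
      (hjk (hsym ▸ Sym2.mem_mk_right _ _)).2
    have gap : p + 1 < h ∨ h + 1 < p := by simp at h₁p h₁p' h₀p h₀p'; omega
    refine ⟨h, p :: r, (indepSwaps_cons p hchain).tail ⟨[], p, h, r, gap, rfl, rfl⟩, hh, ?_⟩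
    rwa [Equiv.trans_apply, Equiv.trans_apply, adjSwap_apply_of_ne h₁p h₁p',
      adjSwap_apply_of_ne h₀p h₀p'] at hsym

lemma indepSwaps_of_localSeqOf_eq (ρ : Fin n ≃ L) {l l' : List ℕ} (hl : ∀ h ∈ l, h + 1 < n)
    (hl' : ∀ h ∈ l', h + 1 < n) (hseq : localSeqOf ρ l = localSeqOf ρ l') :
    Relation.ReflTransGen IndepSwap l l' := by
  induction l generalizing ρ l' with
  | nil =>
    cases l' with
    | nil => rfl
    | cons h' r' =>
      have hh' := hl' h' List.mem_cons_self
      have := congrFun hseq (ρ ⟨h' + 1, hh'⟩)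
      simp [localSeqOf_cons hh', partner] at this
  | cons h r ih =>
    have hh := hl h List.mem_cons_self
    have hrow := fun i => localSeqOf_cons hh ρ r i
    obtain ⟨h', r', hchain, hh', hsym⟩ := exists_indepSwaps_cons_of_head? ρ l' hl'
      (j := ρ ⟨h + 1, hh⟩) (k := ρ ⟨h, by omega⟩)
      (by rw [← hseq, hrow]; simp [partner]) (by rw [← hseq, hrow]; simp [partner])
    obtain rfl : h = h' := by
      simp only [Sym2.eq_iff, ρ.injective.eq_iff, Fin.mk.injEq] at hsym
      omega
    have hseq' := hseq.trans (indepSwaps_localSeqOf_eq hchain hl' ρ)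
    have htail : localSeqOf ((adjSwap n h).trans ρ) r = localSeqOf ((adjSwap n h).trans ρ) r' :=
      funext fun i => List.append_cancel_left <| by
        rw [← localSeqOf_cons hh, ← localSeqOf_cons hh, hseq']
    have hr' : ∀ x ∈ r', x + 1 < n := fun x hx =>
      hl' x ((indepSwaps_perm hchain).mem_iff.2 (List.mem_cons_of_mem _ hx))
    exact (indepSwaps_cons h (ih _ (fun x hx => hl x (List.mem_cons_of_mem _ hx)) hr' htail)).trans
      (indepSwaps_symm hchain)

variable [Fintype L]

def tableauOf (ρ : Fin (Fintype.card L) ≃ L) (l : List ℕ) : Tableau L :=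
  ⟨ρ, localSeqOf ρ l⟩

lemma assocTableau_eq (P : SwapPair L) : assocTableau P = tableauOf P.ρ P.heights := by
  refine congrArg _ (funext fun i => ?_)
  rw [localSeq, localSeqOf, ← map_finRange_eq_incList _ _ P.heights_lt, List.filterMap_map]
  rfl

lemma Bump.symm {Λ Λ' : Tableau L} {j k : L} (hb : Bump Λ Λ' j k) : Bump Λ Λ' k j :=
  let ⟨hne, hj, hk, hrest, hρ⟩ := hb
  ⟨hne.symm, hk, hj, fun i hik hij => hrest i hij hik, by rw [hρ, Equiv.swap_comm]⟩

lemma Bump.right_unique {Λ Λ₁ Λ₂ : Tableau L} {j k : L} (hb₁ : Bump Λ Λ₁ j k)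
    (hb₂ : Bump Λ Λ₂ j k) : Λ₁ = Λ₂ := by
  obtain ⟨ρ₁, row₁⟩ := Λ₁
  obtain ⟨ρ₂, row₂⟩ := Λ₂
  obtain ⟨-, ⟨r₁, hj₁, hj₁'⟩, ⟨s₁, hk₁, hk₁'⟩, hrest₁, hρ₁⟩ := hb₁
  obtain ⟨-, ⟨r₂, hj₂, hj₂'⟩, ⟨s₂, hk₂, hk₂'⟩, hrest₂, hρ₂⟩ := hb₂
  obtain rfl : r₁ = r₂ := List.cons_injective (hj₁.symm.trans hj₂)
  obtain rfl : s₁ = s₂ := List.cons_injective (hk₁.symm.trans hk₂)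
  rw [Tableau.mk.injEq]
  refine ⟨hρ₁.trans hρ₂.symm, funext fun i => ?_⟩
  by_cases hij : i = j
  · subst hij; exact hj₁'.trans hj₂'.symm
  by_cases hik : i = k
  · subst hik; exact hk₁'.trans hk₂'.symm
  exact (hrest₁ i hij hik).trans (hrest₂ i hij hik).symm

lemma bump_tableauOf_rotate {h : ℕ} (hh : h + 1 < Fintype.card L)
    (ρ : Fin (Fintype.card L) ≃ L) (l : List ℕ)
    (hprod : adjSwapProd (Fintype.card L) (h :: l) = 1) :
    Bump (tableauOf ρ (h :: l)) (tableauOf ((adjSwap _ h).trans ρ) (l ++ [h]))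
      (ρ ⟨h + 1, hh⟩) (ρ ⟨h, by omega⟩) := by
  set j := ρ ⟨h + 1, hh⟩
  set k := ρ ⟨h, by omega⟩
  set σ := (adjSwap _ h).trans ρ
  have hjk : j ≠ k := ρ.injective.ne (by simp)
  have hrow : ∀ i, localSeqOf ρ (h :: l) i = (partner i (j, k)).toList ++ localSeqOf σ l i :=
    localSeqOf_cons hh ρ l
  have hrow' : ∀ i, localSeqOf σ (l ++ [h]) i = localSeqOf σ l i ++ (partner i (j, k)).toList := by
    intro i
    rw [localSeqOf_append, adjSwapProd_cons_trans_of_eq_one hprod, localSeqOf_cons hh,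
      localSeqOf_nil, List.append_nil]
  have hj : partner j (j, k) = some k := if_pos rfl
  have hk : partner k (j, k) = some j := by simp [partner, hjk]
  refine ⟨hjk, ⟨localSeqOf σ l j, by simp [tableauOf, hrow, hj], by simp [tableauOf, hrow', hj]⟩,
    ⟨localSeqOf σ l k, by simp [tableauOf, hrow, hk], by simp [tableauOf, hrow', hk]⟩,
    fun i hij hik => ?_, ?_⟩
  · simp [tableauOf, hrow, hrow', partner, Ne.symm hij, Ne.symm hik]
  · exact (adjSwap_trans hh ρ).trans (by rw [Equiv.swap_comm]; rfl)

lemma bumps_tableauOf_rotate (ρ : Fin (Fintype.card L) ≃ L) (u v : List ℕ)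
    (hu : ∀ h ∈ u, h + 1 < Fintype.card L) (hprod : adjSwapProd (Fintype.card L) (u ++ v) = 1) :
    Relation.ReflTransGen BumpStep (tableauOf ρ (u ++ v))
      (tableauOf ((adjSwapProd _ u).trans ρ) (v ++ u)) := by
  induction u generalizing ρ v with
  | nil => simpa [Equiv.Perm.one_def] using Relation.ReflTransGen.refl
  | cons h u ih =>
    have hh := hu h List.mem_cons_self
    have hrest := ih ((adjSwap _ h).trans ρ) (v ++ [h])
      (fun x hx => hu x (List.mem_cons_of_mem _ hx))
      (by simpa using adjSwapProd_rotate (l := u ++ v) hprod)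
    rw [← Equiv.trans_assoc, ← Equiv.Perm.mul_def, ← adjSwapProd_cons, List.append_assoc,
      List.singleton_append, ← List.append_assoc] at hrest
    exact .head ⟨_, _, bump_tableauOf_rotate hh ρ (u ++ v) hprod⟩ hrest

lemma SwapPair.tableauOf_eq_of_indepSwaps (P : SwapPair L) {l : List ℕ}
    (hs : Relation.ReflTransGen IndepSwap P.heights l) :
    tableauOf P.ρ l = assocTableau P := by
  rw [assocTableau_eq, tableauOf, tableauOf, indepSwaps_localSeqOf_eq hs P.heights_lt]

lemma SwapPair.exists_swapEquiv_of_indepSwaps (P : SwapPair L) {l : List ℕ}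
    (hs : Relation.ReflTransGen IndepSwap P.heights l) :
    ∃ Q : SwapPair L, Q.ρ = P.ρ ∧ Q.heights = l ∧ SwapEquiv P Q := by
  induction hs with
  | refl => exact ⟨P, rfl, rfl, .refl _⟩
  | tail _ hstep ih =>
    obtain ⟨Q, hρ, rfl, hPQ⟩ := ih
    obtain ⟨pre, h₁, h₂, post, gap, hQ, hl'⟩ := id hstep
    refine ⟨⟨Q.ρ, _, fun h hm => Q.heights_lt h (hstep.perm.mem_iff.2 hm),
      hstep.adjSwapProd_eq.symm.trans Q.prod_eq_one⟩, hρ, rfl, hPQ.trans _ _ _ (.rel _ _ ?_)⟩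
    exact .inr ⟨pre, h₁, h₂, post, gap, hQ, hl', rfl⟩

lemma SwapPair.swapEquiv_of_assocTableau_eq {P Q : SwapPair L}
    (h : assocTableau P = assocTableau Q) : SwapEquiv P Q := by
  rw [assocTableau_eq, assocTableau_eq, tableauOf, tableauOf, Tableau.mk.injEq] at h
  obtain ⟨hρ, hseq⟩ := h
  obtain ⟨Q', hρ', hl', hPQ'⟩ := P.exists_swapEquiv_of_indepSwaps
    (indepSwaps_of_localSeqOf_eq P.ρ P.heights_lt Q.heights_lt (hρ ▸ hseq))
  obtain ⟨ρ, l, _, _⟩ := Q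
  obtain ⟨ρ', l', _, _⟩ := Q'
  cases hρ.symm.trans hρ'.symm
  cases hl'
  exact hPQ'

lemma ElemMove.bumps {P Q : SwapPair L} (hm : ElemMove P Q) :
    Relation.ReflTransGen BumpStep (assocTableau P) (assocTableau Q) ∧
      Relation.ReflTransGen BumpStep (assocTableau Q) (assocTableau P) := by
  rcases hm with ⟨h, rest, hP, hQ, hρ⟩ | ⟨pre, h₁, h₂, post, gap, hP, hQ, hρ⟩
  · have hprod : adjSwapProd _ (h :: rest) = 1 := hP ▸ P.prod_eq_one
    have hh := P.heights_lt h (hP ▸ List.mem_cons_self)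
    have hback := bumps_tableauOf_rotate ((adjSwap _ h).trans P.ρ) rest [h]
      (fun x hx => P.heights_lt x (by simp [hP, hx])) (adjSwapProd_rotate hprod)
    rw [adjSwapProd_cons_trans_of_eq_one hprod] at hback
    rw [assocTableau_eq, assocTableau_eq, hP, hQ, hρ]
    exact ⟨.single ⟨_, _, bump_tableauOf_rotate hh P.ρ rest hprod⟩, hback⟩
  · rw [← P.tableauOf_eq_of_indepSwaps (.single ⟨pre, h₁, h₂, post, gap, hP, hQ⟩),
      assocTableau_eq, hρ]
    exact ⟨.refl, .refl⟩

lemma SwapEquiv.bumps {P Q : SwapPair L} (h : SwapEquiv P Q) :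
    Relation.ReflTransGen BumpStep (assocTableau P) (assocTableau Q) := by
  suffices Relation.ReflTransGen BumpStep (assocTableau P) (assocTableau Q) ∧
      Relation.ReflTransGen BumpStep (assocTableau Q) (assocTableau P) from this.1
  induction h with
  | rel _ _ hm => exact hm.bumps
  | refl => exact ⟨.refl, .refl⟩
  | symm _ _ _ ih => exact ih.symm
  | trans _ _ _ _ _ ih₁ ih₂ => exact ⟨ih₁.1.trans ih₂.1, ih₂.2.trans ih₁.2⟩

lemma SwapPair.exists_swapEquiv_of_bump (R : SwapPair L) {Λ : Tableau L} {j k : L}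
    (hb : Bump (assocTableau R) Λ j k) :
    ∃ R' : SwapPair L, SwapEquiv R R' ∧ assocTableau R' = Λ := by
  obtain ⟨rj, hrj, -⟩ := hb.2.1
  obtain ⟨rk, hrk, -⟩ := hb.2.2.1
  rw [assocTableau_eq] at hrj hrk
  obtain ⟨h, r, hchain, hh, hsym⟩ := exists_indepSwaps_cons_of_head? R.ρ R.heights R.heights_lt
    (List.head?_eq_some_iff.2 ⟨rj, hrj⟩) (List.head?_eq_some_iff.2 ⟨rk, hrk⟩)
  obtain ⟨R₁, hρ₁, hl₁, hRR₁⟩ := R.exists_swapEquiv_of_indepSwaps hchain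
  have hprod : adjSwapProd _ (h :: r) = 1 := hl₁ ▸ R₁.prod_eq_one
  let R₂ : SwapPair L := ⟨(adjSwap _ h).trans R.ρ, r ++ [h],
    fun x hx => R₁.heights_lt x (by simp [hl₁] at hx ⊢; tauto), adjSwapProd_rotate hprod⟩
  have hbump : Bump (assocTableau R) (assocTableau R₂) (R.ρ ⟨h + 1, hh⟩) (R.ρ ⟨h, by omega⟩) := by
    rw [← R.tableauOf_eq_of_indepSwaps hchain, assocTableau_eq]
    exact bump_tableauOf_rotate hh R.ρ r hprod
  refine ⟨R₂, hRR₁.trans _ _ _ (.rel _ _ (.inl ⟨h, r, hl₁, rfl, by rw [hρ₁]⟩)), ?_⟩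
  rcases Sym2.eq_iff.1 hsym with ⟨hj, hk⟩ | ⟨hj, hk⟩
  · exact (hj ▸ hk ▸ hbump).right_unique hb
  · exact (hj ▸ hk ▸ hbump).symm.right_unique hb

lemma SwapPair.exists_swapEquiv_of_bumps (P : SwapPair L) {Λ : Tableau L}
    (h : Relation.ReflTransGen BumpStep (assocTableau P) Λ) :
    ∃ P' : SwapPair L, SwapEquiv P P' ∧ assocTableau P' = Λ := by
  induction h with
  | refl => exact ⟨P, .refl _, rfl⟩
  | tail _ hstep ih =>
    obtain ⟨P', hPP', rfl⟩ := ih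
    obtain ⟨j, k, hb⟩ := hstep
    obtain ⟨P'', hP'P'', hP''⟩ := P'.exists_swapEquiv_of_bump hb
    exact ⟨P'', hPP'.trans _ _ _ hP'P'', hP''⟩

end RealBody

/-- Remark 4 of the paper.  Two tableaux are tableau
representations of the same combinatorial type if and only if one can be
obtained from the other by a finite sequence of bumps. -/
theorem statement15 {L : Type*} [Fintype L] (P Q : RealBody.SwapPair L) :
    RealBody.SwapEquiv P Q ↔
      Relation.ReflTransGen RealBody.BumpStep
        (RealBody.assocTableau P) (RealBody.assocTableau Q) := by
  refine ⟨RealBody.SwapEquiv.bumps, fun h => ?_⟩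
  obtain ⟨P', hPP', hP'⟩ := P.exists_swapEquiv_of_bumps h
  exact hPP'.trans _ _ _ (RealBody.SwapPair.swapEquiv_of_assocTableau_eq hP')
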